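/- Let f : ℝⁿ → ℝ be convex and differentiable, ψ : ℝⁿ → ℝ ∪ {+∞} convex, proper, and closed, F = f + ψ with minimizer x* and optimal value F*, and suppose F satisfies μ-optimal-set strong convexity at x with respect to x* for some μ > 0. Let H be a symmetric positive semidefinite matrix, γ ∈ (0,1], η ∈ [0,1), and suppose d satisfies Q(d) ≤ (1 − η)Q* and the sufficient decrease condition F(x) − F(x + d) ≥ −γQ(d). Then F(x + d) − F* ≤ (1 − γ(1 − η)μ/(μ + ‖H‖))·(F(x) − F*). -/

import Mathlib

/-
Setting: minimize F = f + ψ over ℝⁿ (modeled as `EuclideanSpace ℝ (Fin n)`), where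
f : ℝⁿ → ℝ is smooth and ψ : ℝⁿ → ℝ ∪ {+∞} (modeled as `EReal`-valued, never ⊥)
is convex, proper and closed.  The quadratic model at x with symmetric operator H is
Q(d) = ⟪∇f(x), d⟫ + (1/2)⟪H d, d⟫ + ψ(x+d) − ψ(x), and Δ(d) = ⟪∇f(x), d⟫ + ψ(x+d) − ψ(x).
-/

open scoped RealInnerProductSpace
open Set Filter Topology

noncomputable section

/-- Convexity for extended-real-valued functions (values in ℝ ∪ {±∞}). -/
def ConvexE {n : ℕ} (g : EuclideanSpace ℝ (Fin n) → EReal) : Prop :=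
  ∀ x y : EuclideanSpace ℝ (Fin n), ∀ a b : ℝ, 0 ≤ a → 0 ≤ b → a + b = 1 →
    g (a • x + b • y) ≤ (a : EReal) * g x + (b : EReal) * g y

/-- ψ is proper: it never takes the value −∞ (its values lie in ℝ ∪ {+∞})
and it is finite somewhere. -/
def ProperPsi {n : ℕ} (ψ : EuclideanSpace ℝ (Fin n) → EReal) : Prop :=
  (∀ x, ψ x ≠ ⊥) ∧ ∃ x, ψ x ≠ ⊤

/-- ψ is closed, i.e. lower semicontinuous. -/
def ClosedPsi {n : ℕ} (ψ : EuclideanSpace ℝ (Fin n) → EReal) : Prop :=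
  LowerSemicontinuous ψ

/-- H is a symmetric (self-adjoint) linear operator. -/
def SymmCLM {n : ℕ} (H : EuclideanSpace ℝ (Fin n) →L[ℝ] EuclideanSpace ℝ (Fin n)) : Prop :=
  ∀ u v, ⟪H u, v⟫ = ⟪u, H v⟫

/-- m is the smallest eigenvalue of the symmetric operator H
(characterized as the minimum of the Rayleigh quotient over the unit sphere). -/
def IsSmallestEigenvalue {n : ℕ} (H : EuclideanSpace ℝ (Fin n) →L[ℝ] EuclideanSpace ℝ (Fin n))
    (m : ℝ) : Prop :=
  IsLeast {r : ℝ | ∃ u : EuclideanSpace ℝ (Fin n), ‖u‖ = 1 ∧ r = ⟪H u, u⟫} m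

/-- The objective F = f + ψ (extended-real-valued). -/
def Fm {n : ℕ} (f : EuclideanSpace ℝ (Fin n) → ℝ) (ψ : EuclideanSpace ℝ (Fin n) → EReal)
    (x : EuclideanSpace ℝ (Fin n)) : EReal :=
  (f x : EReal) + ψ x

/-- The quadratic model Q(d) = ∇f(x)ᵀd + (1/2)dᵀHd + ψ(x+d) − ψ(x). -/
def Qm {n : ℕ} (f : EuclideanSpace ℝ (Fin n) → ℝ) (ψ : EuclideanSpace ℝ (Fin n) → EReal)
    (H : EuclideanSpace ℝ (Fin n) →L[ℝ] EuclideanSpace ℝ (Fin n))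
    (x d : EuclideanSpace ℝ (Fin n)) : EReal :=
  ((⟪gradient f x, d⟫ + 1 / 2 * ⟪H d, d⟫ : ℝ) : EReal) + ψ (x + d) - ψ x

/-- Δ(d) = ∇f(x)ᵀd + ψ(x+d) − ψ(x). -/
def Dm {n : ℕ} (f : EuclideanSpace ℝ (Fin n) → ℝ) (ψ : EuclideanSpace ℝ (Fin n) → EReal)
    (x d : EuclideanSpace ℝ (Fin n)) : EReal :=
  ((⟪gradient f x, d⟫ : ℝ) : EReal) + ψ (x + d) - ψ x

/-- g is σ-strongly convex: g − (σ/2)‖·‖² is convex. -/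
def StrongConvexE {n : ℕ} (σ : ℝ) (g : EuclideanSpace ℝ (Fin n) → EReal) : Prop :=
  ConvexE (fun d => g d - ((σ / 2 * ‖d‖ ^ 2 : ℝ) : EReal))

/-- The solution set Ω = argmin F. -/
def SolSet {n : ℕ} (f : EuclideanSpace ℝ (Fin n) → ℝ)
    (ψ : EuclideanSpace ℝ (Fin n) → EReal) : Set (EuclideanSpace ℝ (Fin n)) :=
  {y | ∀ z, Fm f ψ y ≤ Fm f ψ z}

/-
Test the quadratic model at the step `e = λ (x* - x)`. Convexity of `f` bounds the linear term
by `f (x + e) - f x`, the operator norm bounds the curvature term by `‖H‖ λ² ‖x - x*‖² / 2`, and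
optimal-set strong convexity at `1 - λ` bounds `F (x + e)`. With `λ = μ / (μ + ‖H‖)` the two
`‖x - x*‖²` terms cancel, so `Q* ≤ λ (F* - F x)`. The inexactness and sufficient decrease
conditions then give `F (x + d) - F x ≤ γ (1 - η) Q*`, which rearranges to the rate.
-/

theorem ConvexOn.inner_gradient_le_sub {E : Type*} [NormedAddCommGroup E] [InnerProductSpace ℝ E]
    [CompleteSpace E] {f : E → ℝ} (hfconv : ConvexOn ℝ univ f) {x : E}
    (hf : DifferentiableAt ℝ f x) (y : E) :
    ⟪gradient f x, y - x⟫ ≤ f y - f x := by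
  have hline : HasDerivAt (f ∘ AffineMap.lineMap (k := ℝ) x y) ⟪gradient f x, y - x⟫ 0 := by
    have hfx : HasFDerivAt f (InnerProductSpace.toDual ℝ E (gradient f x) : E →L[ℝ] ℝ)
        (AffineMap.lineMap (k := ℝ) x y 0) := by
      simpa using hf.hasGradientAt.hasFDerivAt
    simpa using hfx.comp_hasDerivAt (0 : ℝ) AffineMap.hasDerivAt_lineMap
  simpa [slope_def_field] using
    (hfconv.comp_affineMap (AffineMap.lineMap x y)).le_slope_of_hasDerivAt
      (mem_univ 0) (mem_univ 1) one_pos hline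

theorem ContinuousLinearMap.inner_apply_self_le_opNorm_mul_sq {E : Type*} [NormedAddCommGroup E]
    [InnerProductSpace ℝ E] (H : E →L[ℝ] E) (e : E) : ⟪H e, e⟫ ≤ ‖H‖ * ‖e‖ ^ 2 :=
  calc ⟪H e, e⟫ ≤ ‖H e‖ * ‖e‖ := real_inner_le_norm _ _
    _ ≤ ‖H‖ * ‖e‖ * ‖e‖ := by gcongr; exact H.le_opNorm e
    _ = ‖H‖ * ‖e‖ ^ 2 := by ring

def OptimalSetStronglyConvexAt {E : Type*} [NormedAddCommGroup E] [Module ℝ E]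
    (F : E → EReal) (μ : ℝ) (x xstar : E) : Prop :=
  ∀ lam : ℝ, lam ∈ Set.Icc (0 : ℝ) 1 →
    F (lam • x + (1 - lam) • xstar) ≤
      ((lam : ℝ) : EReal) * F x + ((1 - lam : ℝ) : EReal) * F xstar -
        ((μ * lam * (1 - lam) / 2 * ‖x - xstar‖ ^ 2 : ℝ) : EReal)

section CompositeModel

variable {n : ℕ} {f : EuclideanSpace ℝ (Fin n) → ℝ} {ψ : EuclideanSpace ℝ (Fin n) → EReal}
  {H : EuclideanSpace ℝ (Fin n) →L[ℝ] EuclideanSpace ℝ (Fin n)}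
  {x y d xstar : EuclideanSpace ℝ (Fin n)} {a b μ : ℝ}

lemma Fm_eq_coe (ha : ψ y = a) : Fm f ψ y = ((f y + a : ℝ) : EReal) := by
  rw [Fm, ha, EReal.coe_add]

lemma Qm_eq_coe (ha : ψ x = a) (hb : ψ (x + d) = b) :
    Qm f ψ H x d = ((⟪gradient f x, d⟫ + 1 / 2 * ⟪H d, d⟫ + b - a : ℝ) : EReal) := by
  rw [Qm, ha, hb]
  norm_cast

lemma ne_top_of_Fm_le_coe {r : ℝ} (h : Fm f ψ y ≤ r) : ψ y ≠ ⊤ := by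
  intro htop
  rw [Fm, htop, EReal.coe_add_top, top_le_iff] at h
  exact EReal.coe_ne_top r h

lemma ne_top_of_Qm_le_coe {r : ℝ} (ha : ψ x = a) (h : Qm f ψ H x d ≤ r) : ψ (x + d) ≠ ⊤ := by
  intro htop
  rw [Qm, ha, htop, EReal.coe_add_top, EReal.top_sub_coe, top_le_iff] at h
  exact EReal.coe_ne_top r h

lemma Qm_smul_sub_le_of_optimalSetStronglyConvexAt (hf : DifferentiableAt ℝ f x)
    (hfconv : ConvexOn ℝ univ f) (hψbot : ∀ y, ψ y ≠ ⊥)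
    (hossc : OptimalSetStronglyConvexAt (Fm f ψ) μ x xstar) (ha : ψ x = a) (hb : ψ xstar = b)
    {lam : ℝ} (hlam : lam ∈ Icc (0 : ℝ) 1) :
    Qm f ψ H x (lam • (xstar - x)) ≤
      ((lam * ((f xstar + b) - (f x + a)) +
        lam * (lam * ‖H‖ - μ * (1 - lam)) / 2 * ‖x - xstar‖ ^ 2 : ℝ) : EReal) := by
  set e := lam • (xstar - x)
  have hstep : (1 - lam) • x + (1 - (1 - lam)) • xstar = x + e := by
    simp only [e]; match_scalars <;> ring
  have hoss := hossc (1 - lam) ⟨by linarith [hlam.2], by linarith [hlam.1]⟩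
  rw [hstep, Fm_eq_coe ha, Fm_eq_coe hb] at hoss
  have hxe : ψ (x + e) ≠ ⊤ := ne_top_of_Fm_le_coe (by exact_mod_cast hoss)
  obtain ⟨c, hc⟩ : ∃ c : ℝ, ψ (x + e) = c := ⟨_, (EReal.coe_toReal hxe (hψbot _)).symm⟩
  have hossR : f (x + e) + c ≤ (1 - lam) * (f x + a) + (1 - (1 - lam)) * (f xstar + b) -
      μ * (1 - lam) * (1 - (1 - lam)) / 2 * ‖x - xstar‖ ^ 2 := by
    rw [Fm_eq_coe hc] at hoss
    exact_mod_cast hoss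
  have hgrad : ⟪gradient f x, e⟫ ≤ f (x + e) - f x := by
    simpa using hfconv.inner_gradient_le_sub hf (x + e)
  have hquad : ⟪H e, e⟫ ≤ ‖H‖ * (lam ^ 2 * ‖x - xstar‖ ^ 2) := by
    have hnorm : ‖e‖ = lam * ‖x - xstar‖ := by
      rw [norm_smul, Real.norm_of_nonneg hlam.1, norm_sub_rev]
    simpa [hnorm, mul_pow] using H.inner_apply_self_le_opNorm_mul_sq e
  rw [Qm_eq_coe ha hc, EReal.coe_le_coe_iff]
  linear_combination hgrad + 1 / 2 * hquad + hossR

lemma iInf_Qm_le_of_optimalSetStronglyConvexAt (hf : DifferentiableAt ℝ f x)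
    (hfconv : ConvexOn ℝ univ f) (hψbot : ∀ y, ψ y ≠ ⊥) (hμ : 0 < μ)
    (hossc : OptimalSetStronglyConvexAt (Fm f ψ) μ x xstar) (ha : ψ x = a) (hb : ψ xstar = b) :
    ⨅ e, Qm f ψ H x e ≤ ((μ / (μ + ‖H‖) * ((f xstar + b) - (f x + a)) : ℝ) : EReal) := by
  have hden : 0 < μ + ‖H‖ := by positivity
  set lam := μ / (μ + ‖H‖)
  have hlam : lam ∈ Icc (0 : ℝ) 1 :=
    ⟨by positivity, (div_le_one hden).2 (le_add_of_nonneg_right (norm_nonneg H))⟩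
  have hbalance : lam * ‖H‖ - μ * (1 - lam) = 0 := by
    simp only [lam]; field_simp; ring
  refine (iInf_le _ (lam • (xstar - x))).trans ?_
  simpa only [hbalance, mul_zero, zero_div, zero_mul, add_zero] using
    Qm_smul_sub_le_of_optimalSetStronglyConvexAt (H := H) hf hfconv hψbot hossc ha hb hlam

end CompositeModel

theorem linear_rate_step_sufficient_decrease_general {n : ℕ}
    (f : EuclideanSpace ℝ (Fin n) → ℝ) (ψ : EuclideanSpace ℝ (Fin n) → EReal)
    (H : EuclideanSpace ℝ (Fin n) →L[ℝ] EuclideanSpace ℝ (Fin n))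
    (x xstar d : EuclideanSpace ℝ (Fin n)) (μ γ η : ℝ)
    (hf : Differentiable ℝ f) (hfconv : ConvexOn ℝ Set.univ f)
    (hψproper : ProperPsi ψ)
    (hdom : ψ x ≠ ⊤)
    (hmin : ∀ y, Fm f ψ xstar ≤ Fm f ψ y)
    (hμ : 0 < μ)
    (hossc : ∀ lam : ℝ, lam ∈ Set.Icc (0 : ℝ) 1 →
        Fm f ψ (lam • x + (1 - lam) • xstar) ≤
          ((lam : ℝ) : EReal) * Fm f ψ x + ((1 - lam : ℝ) : EReal) * Fm f ψ xstar -
            ((μ * lam * (1 - lam) / 2 * ‖x - xstar‖ ^ 2 : ℝ) : EReal))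
    (hγ0 : 0 < γ) (hη1 : η < 1)
    (happrox : Qm f ψ H x d ≤ ((1 - η : ℝ) : EReal) * ⨅ e, Qm f ψ H x e)
    (hdecrease : ((-γ : ℝ) : EReal) * Qm f ψ H x d ≤ Fm f ψ x - Fm f ψ (x + d)) :
    Fm f ψ (x + d) - Fm f ψ xstar ≤
      ((1 - γ * (1 - η) * μ / (μ + ‖H‖) : ℝ) : EReal) * (Fm f ψ x - Fm f ψ xstar) := by
  obtain ⟨hψbot, -⟩ := hψproper
  obtain ⟨a, ha⟩ : ∃ a : ℝ, ψ x = a := ⟨_, (EReal.coe_toReal hdom (hψbot x)).symm⟩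
  have hxstar : ψ xstar ≠ ⊤ := ne_top_of_Fm_le_coe ((hmin x).trans_eq (Fm_eq_coe ha))
  obtain ⟨b, hb⟩ : ∃ b : ℝ, ψ xstar = b := ⟨_, (EReal.coe_toReal hxstar (hψbot xstar)).symm⟩
  have hQd : Qm f ψ H x d ≤
      (((1 - η) * (μ / (μ + ‖H‖) * ((f xstar + b) - (f x + a))) : ℝ) : EReal) := by
    refine happrox.trans ?_
    rw [EReal.coe_mul]
    exact mul_le_mul_of_nonneg_left
      (iInf_Qm_le_of_optimalSetStronglyConvexAt (hf x) hfconv hψbot hμ hossc ha hb)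
      (EReal.coe_nonneg.2 (sub_nonneg.2 hη1.le))
  have hxd : ψ (x + d) ≠ ⊤ := ne_top_of_Qm_le_coe ha hQd
  obtain ⟨c, hc⟩ : ∃ c : ℝ, ψ (x + d) = c := ⟨_, (EReal.coe_toReal hxd (hψbot _)).symm⟩
  rw [Qm_eq_coe ha hc, EReal.coe_le_coe_iff] at hQd
  rw [Qm_eq_coe ha hc, Fm_eq_coe ha, Fm_eq_coe hc] at hdecrease
  rw [Fm_eq_coe ha, Fm_eq_coe hb, Fm_eq_coe hc]
  have hdecR : -γ * (⟪gradient f x, d⟫ + 1 / 2 * ⟪H d, d⟫ + c - a) ≤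
      (f x + a) - (f (x + d) + c) := by exact_mod_cast hdecrease
  have hrate : (f (x + d) + c) - (f xstar + b) ≤
      (1 - γ * (1 - η) * μ / (μ + ‖H‖)) * ((f x + a) - (f xstar + b)) := by
    rw [mul_div_assoc]
    linear_combination hdecR + γ * hQd
  exact_mod_cast hrate

/-- With f convex differentiable, x* a minimizer of F, F satisfying
μ-optimal-set strong convexity at x (μ > 0), H symmetric psd, γ ∈ (0,1], η ∈ [0,1),
if Q(d) ≤ (1 − η)Q* and the sufficient decrease condition F(x) − F(x + d) ≥ −γQ(d)
holds, then F(x + d) − F* ≤ (1 − γ(1 − η)μ/(μ + ‖H‖))(F(x) − F*). -/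
theorem linear_rate_step_sufficient_decrease {n : ℕ}
    (f : EuclideanSpace ℝ (Fin n) → ℝ) (ψ : EuclideanSpace ℝ (Fin n) → EReal)
    (H : EuclideanSpace ℝ (Fin n) →L[ℝ] EuclideanSpace ℝ (Fin n))
    (x xstar d : EuclideanSpace ℝ (Fin n)) (μ γ η : ℝ)
    (hf : Differentiable ℝ f) (hfconv : ConvexOn ℝ Set.univ f)
    (hψconv : ConvexE ψ) (hψproper : ProperPsi ψ) (hψclosed : ClosedPsi ψ)
    (hdom : ψ x ≠ ⊤)
    (hmin : ∀ y, Fm f ψ xstar ≤ Fm f ψ y)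
    (hμ : 0 < μ)
    (hossc : ∀ lam : ℝ, lam ∈ Set.Icc (0 : ℝ) 1 →
        Fm f ψ (lam • x + (1 - lam) • xstar) ≤
          ((lam : ℝ) : EReal) * Fm f ψ x + ((1 - lam : ℝ) : EReal) * Fm f ψ xstar -
            ((μ * lam * (1 - lam) / 2 * ‖x - xstar‖ ^ 2 : ℝ) : EReal))
    (hH : SymmCLM H) (hHpsd : ∀ e : EuclideanSpace ℝ (Fin n), 0 ≤ ⟪H e, e⟫)
    (hγ0 : 0 < γ) (hγ1 : γ ≤ 1) (hη0 : 0 ≤ η) (hη1 : η < 1)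
    (happrox : Qm f ψ H x d ≤ ((1 - η : ℝ) : EReal) * ⨅ e, Qm f ψ H x e)
    (hdecrease : ((-γ : ℝ) : EReal) * Qm f ψ H x d ≤ Fm f ψ x - Fm f ψ (x + d)) :
    Fm f ψ (x + d) - Fm f ψ xstar ≤
      ((1 - γ * (1 - η) * μ / (μ + ‖H‖) : ℝ) : EReal) * (Fm f ψ x - Fm f ψ xstar) :=
  linear_rate_step_sufficient_decrease_general f ψ H x xstar d μ γ η hf hfconv hψproper hdom hmin hμ
    hossc hγ0 hη1 happrox hdecrease
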